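/- Suppose Ĉ ⊇ {f(x₀,u) : x₀ ∈ C, u ∈ U} ∪ C and X_r ⊆ C ⊆ Ĉ, let λ ∈ (1,∞), and let v : Ĉ → ℝ be a bounded Borel-measurable function satisfying E[v(f̂(x,u))] − λ·v(x) ≥ 0 for all x ∈ Ĉ \ X_r. Let x₀ ∈ Ĉ and k ∈ ℕ, and suppose that for every input sequence ω ∈ U^ℕ and every 0 ≤ i < k the modified trajectory satisfies ψ_{x₀}^ω(i) ∈ Ĉ \ X_r. Then the expectation of v along the modified trajectory under i.i.d. random inputs grows geometrically: E^∞[v(ψ_{x₀}^ω(i))] ≥ λ^i · v(x₀) for all 0 ≤ i ≤ k. -/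
import Mathlib


open MeasureTheory
open scoped ENNReal

/-- Trajectory of the discrete-time control system `x(k+1) = f(x(k), u(k))`,
driven by the controller / input sequence `u : ℕ → U` from initial state `x0`. -/
def traj {X U : Type*} (f : X → U → X) (x0 : X) (u : ℕ → U) : ℕ → X
  | 0 => x0
  | k + 1 => f (traj f x0 u k) (u k)

open Classical in
/-- Modified dynamics `f̂(x,u) = f(x,u)` if `x ∈ C \ Xr`, and `f̂(x,u) = x`
otherwise (i.e. if `x ∈ Xr` or `x ∈ Ĉ \ C`). -/
noncomputable def modf {X U : Type*} (f : X → U → X) (C Xr : Set X) (x : X) (u : U) : X :=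
  if x ∈ C \ Xr then f x u else x

/-- Finite-horizon trajectory: state at time `i` as a function of the first `i` inputs. -/
def trajFin {X U : Type*} (g : X → U → X) (x0 : X) : ∀ i : ℕ, (Fin i → U) → X
  | 0, _ => x0
  | i + 1, y => g (trajFin g x0 i (fun j => y j.castSucc)) (y (Fin.last i))

lemma traj_eq_trajFin {X U : Type*} (g : X → U → X) (x0 : X) (ω : ℕ → U) :
    ∀ i, traj g x0 ω i = trajFin g x0 i (fun j => ω j) := by
  intro i
  induction i with
  | zero => rfl
  | succ i ih =>
    show g (traj g x0 ω i) (ω i) = _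
    rw [ih]
    simp only [trajFin]
    congr 1

lemma trajFin_measurable {X U : Type*} [MeasurableSpace X] [MeasurableSpace U]
    (g : X → U → X) (hg : Measurable (Function.uncurry g)) (x0 : X) (i : ℕ) :
    Measurable (trajFin g x0 i) := by
  induction i with
  | zero => exact measurable_const
  | succ i ih =>
    have h1 : Measurable fun y : Fin (i + 1) → U =>
        (trajFin g x0 i (fun j => y j.castSucc), y (Fin.last i)) := by
      refine Measurable.prodMk ?_ (measurable_pi_apply _)
      exact ih.comp (measurable_pi_lambda _ fun j => measurable_pi_apply _)
    exact hg.comp h1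

/-- if every modified trajectory from `x₀ ∈ Ĉ` stays in `Ĉ \ Xr`
up to time `k`, then the expectation of `v` along the modified trajectory under
i.i.d. random inputs grows geometrically: `E^∞[v(ψ(i))] ≥ λ^i · v(x₀)` for all
`i ≤ k`. -/
theorem stmt_11 {n : ℕ} {U : Type*} [MeasurableSpace U]
    (P : Measure U) [IsProbabilityMeasure P]
    (f : (Fin n → ℝ) → U → (Fin n → ℝ)) (hf : Measurable (Function.uncurry f))
    (Xr C Chat : Set (Fin n → ℝ))
    (hXrm : MeasurableSet Xr) (hCm : MeasurableSet C) (hChatm : MeasurableSet Chat)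
    (hXrC : Xr ⊆ C) (hCChat : C ⊆ Chat)
    (hstep : ∀ x ∈ C, ∀ u : U, f x u ∈ Chat)
    (Pinf : Measure (ℕ → U)) [IsProbabilityMeasure Pinf]
    (hPinf : ∀ (s : Finset ℕ) (A : ℕ → Set U), (∀ i, MeasurableSet (A i)) →
      Pinf {ω | ∀ i ∈ s, ω i ∈ A i} = ∏ i ∈ s, P (A i))
    (lam : ℝ) (hlam : 1 < lam)
    (v : (Fin n → ℝ) → ℝ) (hv : Measurable v)
    (hvb : ∃ B, ∀ x ∈ Chat, |v x| ≤ B)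
    (hcon : ∀ x ∈ Chat \ Xr, (∫ u, v (modf f C Xr x u) ∂P) - lam * v x ≥ 0)
    (x₀ : Fin n → ℝ) (hx₀ : x₀ ∈ Chat) (k : ℕ)
    (htraj : ∀ (ω : ℕ → U), ∀ i < k, traj (modf f C Xr) x₀ ω i ∈ Chat \ Xr) :
    ∀ i ≤ k, lam ^ i * v x₀ ≤ ∫ ω, v (traj (modf f C Xr) x₀ ω i) ∂Pinf := by
  classical
  obtain ⟨B, hB⟩ := hvb
  -- U is nonempty
  have hUne : Nonempty U := by
    rcases isEmpty_or_nonempty U with h | h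
    · have h1 : P Set.univ = 1 := measure_univ
      rw [Set.univ_eq_empty_iff.mpr h, measure_empty] at h1
      exact absurd h1 (by norm_num)
    · exact h
  set fh : (Fin n → ℝ) → U → (Fin n → ℝ) := modf f C Xr with hfh
  -- fh is jointly measurable
  have hfhm : Measurable (Function.uncurry fh) := by
    have : Function.uncurry fh =
        fun p : (Fin n → ℝ) × U => if p.1 ∈ C \ Xr then f p.1 p.2 else p.1 := by
      funext p; simp [Function.uncurry, hfh, modf]
    rw [this]
    refine Measurable.ite ?_ hf measurable_fst
    exact (hCm.diff hXrm).preimage measurable_fst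
  -- fh maps Chat into Chat
  have hfhChat : ∀ x ∈ Chat, ∀ u : U, fh x u ∈ Chat := by
    intro x hx u
    by_cases hxc : x ∈ C \ Xr
    · simp only [hfh, modf, if_pos hxc]
      exact hstep x hxc.1 u
    · simp only [hfh, modf, if_neg hxc]; exact hx
  -- trajectories stay in Chat
  have hGChat : ∀ i, ∀ y : Fin i → U, trajFin fh x₀ i y ∈ Chat := by
    intro i
    induction i with
    | zero => intro y; exact hx₀
    | succ i ih =>
      intro y
      exact hfhChat _ (ih _) _
  -- trajectories stay in Chat \ Xr for i < k
  have hmem : ∀ i < k, ∀ y : Fin i → U, trajFin fh x₀ i y ∈ Chat \ Xr := by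
    intro i hi y
    set ω : ℕ → U := fun j => if h : j < i then y ⟨j, h⟩ else Classical.arbitrary U with hω
    have h1 := htraj ω i hi
    rw [traj_eq_trajFin] at h1
    have h2 : (fun j : Fin i => ω j) = y := by
      funext j
      simp [hω, j.isLt]
    rwa [h2] at h1
  have hGm : ∀ i, Measurable (trajFin fh x₀ i) := trajFin_measurable fh hfhm x₀
  -- the marginal of Pinf on the first i coordinates is the product measure
  have hmap : ∀ i : ℕ, Pinf.map (fun ω (j : Fin i) => ω (j : ℕ))
      = Measure.pi (fun _ : Fin i => P) := by
    intro i
    have hπ : Measurable fun (ω : ℕ → U) (j : Fin i) => ω (j : ℕ) :=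
      measurable_pi_lambda _ fun j => measurable_pi_apply _
    refine (Measure.pi_eq fun s hs => ?_).symm
    rw [Measure.map_apply hπ (MeasurableSet.univ_pi hs)]
    set s' : ℕ → Set U := fun j => if h : j < i then s ⟨j, h⟩ else Set.univ with hs'
    have hs'm : ∀ j, MeasurableSet (s' j) := by
      intro j
      simp only [hs']
      split
      · exact hs _
      · exact MeasurableSet.univ
    have hset : (fun (ω : ℕ → U) (j : Fin i) => ω (j : ℕ)) ⁻¹' (Set.pi Set.univ s)
        = {ω : ℕ → U | ∀ j ∈ Finset.range i, ω j ∈ s' j} := by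
      ext ω
      simp only [Set.mem_preimage, Set.mem_pi, Set.mem_univ, forall_true_left,
        Set.mem_setOf_eq, Finset.mem_range]
      constructor
      · intro h j hj
        simp only [hs', dif_pos hj]
        exact h ⟨j, hj⟩
      · intro h j
        have := h (j : ℕ) j.isLt
        simpa [hs', j.isLt] using this
    rw [hset, hPinf _ _ hs'm]
    rw [← Fin.prod_univ_eq_prod_range (fun j => P (s' j)) i]
    refine Finset.prod_congr rfl fun j _ => ?_
    simp [hs', j.isLt]
  -- reduce to integrals over the finite product measure
  have hred : ∀ i : ℕ, ∫ ω, v (traj fh x₀ ω i) ∂Pinf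
      = ∫ y, v (trajFin fh x₀ i y) ∂(Measure.pi fun _ : Fin i => P) := by
    intro i
    have hπ : Measurable fun (ω : ℕ → U) (j : Fin i) => ω (j : ℕ) :=
      measurable_pi_lambda _ fun j => measurable_pi_apply _
    have h1 : ∀ ω : ℕ → U, v (traj fh x₀ ω i)
        = (fun y => v (trajFin fh x₀ i y)) (fun j : Fin i => ω (j : ℕ)) := by
      intro ω; rw [traj_eq_trajFin]
    simp_rw [h1]
    rw [← hmap i]
    exact (integral_map hπ.aemeasurable ((hv.comp (hGm i)).aestronglyMeasurable)).symm
  -- integrability of v along trajFin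
  have hBnn : 0 ≤ B := le_trans (abs_nonneg _) (hB x₀ hx₀)
  have hint : ∀ i : ℕ, Integrable (fun y => v (trajFin fh x₀ i y))
      (Measure.pi fun _ : Fin i => P) := by
    intro i
    refine ⟨(hv.comp (hGm i)).aestronglyMeasurable, ?_⟩
    refine HasFiniteIntegral.of_bounded (C := B) (ae_of_all _ fun y => ?_)
    simpa using hB _ (hGChat i y)
  -- main induction
  intro i hik
  rw [hred i]
  induction i with
  | zero =>
    simp [trajFin]
  | succ i ih =>
    have hik' : i < k := hik
    have ihv := ih (le_of_lt hik')
    -- split off the last coordinate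
    have mp := measurePreserving_piFinSuccAbove (fun _ : Fin (i + 1) => P) (Fin.last i)
    set e := MeasurableEquiv.piFinSuccAbove (fun _ : Fin (i + 1) => U) (Fin.last i) with he
    set F : U × (Fin i → U) → ℝ := fun p => v (fh (trajFin fh x₀ i p.2) p.1) with hF
    have hFe : ∀ y : Fin (i + 1) → U, v (trajFin fh x₀ (i + 1) y) = F (e y) := by
      intro y
      simp only [hF, he, MeasurableEquiv.piFinSuccAbove, MeasurableEquiv.coe_mk,
        Equiv.symm_symm]
      show v (trajFin fh x₀ (i + 1) y)
        = v (fh (trajFin fh x₀ i fun j => y ((Fin.last i).succAbove j)) (y (Fin.last i)))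
      simp [trajFin, Fin.succAbove_last]
    have hFm : Measurable F := by
      refine hv.comp (hfhm.comp (Measurable.prodMk ?_ measurable_fst))
      exact (hGm i).comp measurable_snd
    have hFint : Integrable F ((P).prod (Measure.pi fun _ : Fin i => P)) := by
      refine ⟨hFm.aestronglyMeasurable, ?_⟩
      refine HasFiniteIntegral.of_bounded (C := B) (ae_of_all _ fun p => ?_)
      simpa using hB _ (hfhChat _ (hGChat i p.2) p.1)
    have step1 : ∫ y, v (trajFin fh x₀ (i + 1) y) ∂(Measure.pi fun _ : Fin (i + 1) => P)
        = ∫ p, F p ∂((P).prod (Measure.pi fun _ : Fin i => P)) := by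
      simp_rw [hFe]
      exact mp.integral_comp e.measurableEmbedding F
    have step2 : ∫ p, F p ∂((P).prod (Measure.pi fun _ : Fin i => P))
        = ∫ z, ∫ u, F (u, z) ∂P ∂(Measure.pi fun _ : Fin i => P) :=
      integral_prod_symm F hFint
    rw [step1, step2]
    have hmono : ∫ z, lam * v (trajFin fh x₀ i z) ∂(Measure.pi fun _ : Fin i => P)
        ≤ ∫ z, ∫ u, F (u, z) ∂P ∂(Measure.pi fun _ : Fin i => P) := by
      refine integral_mono ((hint i).const_mul lam) hFint.integral_prod_right fun z => ?_
      have hz := hcon _ (hmem i hik' z)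
      have : ∫ u, F (u, z) ∂P = ∫ u, v (modf f C Xr (trajFin fh x₀ i z) u) ∂P := rfl
      rw [this]
      linarith
    refine le_trans ?_ hmono
    rw [integral_const_mul]
    have hlam0 : (0 : ℝ) ≤ lam := le_of_lt (lt_trans one_pos hlam)
    calc lam ^ (i + 1) * v x₀ = lam * (lam ^ i * v x₀) := by ring
      _ ≤ lam * ∫ z, v (trajFin fh x₀ i z) ∂(Measure.pi fun _ : Fin i => P) :=
        mul_le_mul_of_nonneg_left ihv hlam0
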